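/- arXiv:1308.1724 — 6 statements merged into one kernel-verified Lean document; each statement's English description precedes it below -/
import Mathlib

section
/- For a connected diamond graph Γ, all vertices have the same number of neighbors (i.e., Γ is regular). -/
/-!
If `u` and `v` are adjacent, every other neighbour `x` of `u` closes the path `x - u - v` to an
induced square `x u v y`, and `y` is a neighbour of `v` other than `u`. Read backwards, the square
`y v u x` is the unique one closing `y - v - u`, so `x ↦ y` is injective and
`deg u - 1 ≤ deg v - 1`. By symmetry adjacent vertices have equal degree, and connectivity
propagates this along walks.
-/

/-- A diamond graph: any path `a - b - c` with `a ≠ c` completes to a unique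
fourth vertex `d ≠ b` forming a diamond, with `{a,c}` and `{b,d}` non-edges. -/
def SimpleGraph.IsDiamondGraph {V : Type*} (G : SimpleGraph V) : Prop :=
  ∀ a b c : V, G.Adj a b → G.Adj b c → a ≠ c →
    ∃! d : V, d ≠ b ∧ G.Adj a d ∧ G.Adj d c ∧ ¬ G.Adj a c ∧ ¬ G.Adj b d

namespace SimpleGraph

variable {V : Type*} {G : SimpleGraph V} {a b c d u v : V}

def IsInducedSquare (G : SimpleGraph V) (a b c d : V) : Prop :=
  G.Adj a b ∧ G.Adj b c ∧ G.Adj c d ∧ G.Adj d a ∧ a ≠ c ∧ b ≠ d ∧ ¬G.Adj a c ∧ ¬G.Adj b d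

theorem IsInducedSquare.reverse (h : G.IsInducedSquare a b c d) : G.IsInducedSquare d c b a := by
  obtain ⟨hab, hbc, hcd, hda, hac, hbd, hnac, hnbd⟩ := h
  exact ⟨hcd.symm, hbc.symm, hab.symm, hda.symm, hbd.symm, hac.symm,
    fun h ↦ hnbd h.symm, fun h ↦ hnac h.symm⟩

namespace IsDiamondGraph

theorem existsUnique_isInducedSquare (hG : G.IsDiamondGraph) (hab : G.Adj a b)
    (hbc : G.Adj b c) (hac : a ≠ c) : ∃! d, G.IsInducedSquare a b c d := by
  refine (existsUnique_congr fun d ↦ ?_).1 (hG a b c hab hbc hac)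
  simp only [IsInducedSquare, hab, hbc, G.adj_comm d a, G.adj_comm c d, ne_comm (a := d)]
  tauto

variable [DecidableEq V] [G.LocallyFinite]

theorem degree_le_of_adj (hG : G.IsDiamondGraph) (huv : G.Adj u v) :
    G.degree u ≤ G.degree v := by
  have hcard : ((G.neighborFinset u).erase v).card ≤ ((G.neighborFinset v).erase u).card := by
    refine Finset.card_le_card_of_forall_subsingleton (G.IsInducedSquare · u v ·)
      (fun x hx ↦ ?_) (fun y hy ↦ ?_)
    · rw [Finset.mem_erase, mem_neighborFinset] at hx
      obtain ⟨y, hy, -⟩ := hG.existsUnique_isInducedSquare hx.2.symm huv hx.1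
      obtain ⟨-, -, hvy, -, -, huy, -⟩ := id hy
      exact ⟨y, Finset.mem_erase.2 ⟨huy.symm, (G.mem_neighborFinset v y).2 hvy⟩, hy⟩
    · rw [Finset.mem_erase, mem_neighborFinset] at hy
      rintro x₁ ⟨-, hx₁⟩ x₂ ⟨-, hx₂⟩
      exact (hG.existsUnique_isInducedSquare hy.2.symm huv.symm hy.1).unique
        hx₁.reverse hx₂.reverse
  have hvu : u ∈ G.neighborFinset v := (G.mem_neighborFinset v u).2 huv.symm
  rw [Finset.card_erase_of_mem ((G.mem_neighborFinset u v).2 huv),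
    Finset.card_erase_of_mem hvu] at hcard
  have hv : 0 < (G.neighborFinset v).card := Finset.card_pos.2 ⟨u, hvu⟩
  rw [← card_neighborFinset_eq_degree, ← card_neighborFinset_eq_degree]
  omega

theorem degree_eq_of_adj (hG : G.IsDiamondGraph) (huv : G.Adj u v) :
    G.degree u = G.degree v :=
  (hG.degree_le_of_adj huv).antisymm (hG.degree_le_of_adj huv.symm)

end IsDiamondGraph

end SimpleGraph

/-- For a connected diamond graph, all vertices have the same number of
neighbors, i.e. the graph is regular. -/
theorem connected_diamond_graph_regular {V : Type*} [Fintype V] [DecidableEq V]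
    (G : SimpleGraph V) [DecidableRel G.Adj]
    (hdiamond : G.IsDiamondGraph) (hconn : G.Connected) :
    ∀ u v : V, G.degree u = G.degree v := by
  intro u v
  induction (hconn u v).some with
  | nil => rfl
  | cons huw _ ih => exact (hdiamond.degree_eq_of_adj huw).trans ih
end

section
/- Let (C,d) be a chain complex over a field F of characteristic p, whose underlying module is freely generated by the vertex set of a connected admissible diamond graph Γ of rank r, with differential da = Σ_{b: {a,b}∈Γ, |b|=|a|-1} φ(a,b)·b and codifferential δa = Σ_{b: {a,b}∈Γ, |b|=|a|+1} φ(a,b)·b. Then dδ + δd = r·id, and consequently if r is not divisible by p (and r ≠ 0 when p = 0), the homology H_*(C;F) and cohomology H^*(C;F) both vanish. -/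
lemma diamond_cancel {Γ : Type*} [Fintype Γ] [DecidableEq Γ] {F : Type*} [Field F]
    (G : SimpleGraph Γ) [DecidableRel G.Adj] (φ : Γ → Γ → ℤ)
    (hsymm : ∀ a b, φ a b = φ b a)
    (hdiamond : G.IsDiamondGraph)
    (hadmissible : ∀ a b c d : Γ, G.Adj a b → G.Adj b c → G.Adj c d → G.Adj d a →
      ¬ G.Adj a c → ¬ G.Adj b d → φ a b * φ b c + φ a d * φ d c = 0)
    (b c : Γ) (hbc : b ≠ c) :
    ∑ a ∈ Finset.univ.filter (fun a => G.Adj a b ∧ G.Adj a c),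
      ((φ a b : F) * (φ c a : F)) = 0 := by
  have hmem : ∀ a, a ∈ Finset.univ.filter (fun a => G.Adj a b ∧ G.Adj a c) →
      G.Adj a b ∧ G.Adj a c := fun a ha => (Finset.mem_filter.mp ha).2
  refine Finset.sum_involution
    (fun a ha => (hdiamond b a c (hmem a ha).1.symm (hmem a ha).2 hbc).exists.choose)
    ?_ ?_ ?_ ?_
  · intro a ha
    obtain ⟨hab, hac⟩ := hmem a ha
    obtain ⟨hda, hbd, hdc, hnbc, hnad⟩ :=
      (hdiamond b a c hab.symm hac hbc).exists.choose_spec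
    set e := (hdiamond b a c hab.symm hac hbc).exists.choose
    have h := hadmissible b a c e hab.symm hac hdc.symm hbd.symm hnbc hnad
    have h2 : ((φ b a * φ a c + φ b e * φ e c : ℤ) : F) = 0 := by rw [h]; simp
    push_cast at h2
    rw [hsymm a b, hsymm c a, hsymm e b, hsymm c e]
    exact h2
  · intro a ha _
    exact ((hdiamond b a c (hmem a ha).1.symm (hmem a ha).2 hbc).exists.choose_spec).1
  · intro a ha
    obtain ⟨hda, hbd, hdc, hnbc, hnad⟩ :=
      (hdiamond b a c (hmem a ha).1.symm (hmem a ha).2 hbc).exists.choose_spec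
    exact Finset.mem_filter.mpr ⟨Finset.mem_univ _, hbd.symm, hdc⟩
  · intro a ha
    obtain ⟨hab, hac⟩ := hmem a ha
    obtain ⟨hda, hbd, hdc, hnbc, hnad⟩ :=
      (hdiamond b a c hab.symm hac hbc).exists.choose_spec
    have E' := hdiamond b ((hdiamond b a c hab.symm hac hbc).exists.choose) c hbd hdc hbc
    exact E'.unique E'.exists.choose_spec
      ⟨fun h => hda h.symm, hab.symm, hac, hnbc, fun h => hnad h.symm⟩


/-- Let `(C,d)` be a chain complex over a field `F` of characteristic `p`,
freely generated by the vertices of a connected admissible graded diamond graph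
`Γ` of rank `r`, with differential `d` and codifferential `δ` given by the sign
function `φ`.  Then `dδ + δd = r·id`, and if `p` does not divide `r`
(in particular `r ≠ 0` when `p = 0`), both the homology and the cohomology
vanish. -/
theorem diamond_complex_homology_vanishes
    {Γ F : Type*} [Fintype Γ] [DecidableEq Γ] [Field F] (p : ℕ) [CharP F p]
    (G : SimpleGraph Γ) [DecidableRel G.Adj]
    (deg : Γ → ℤ) (φ : Γ → Γ → ℤ)
    (hgraded : ∀ a b, G.Adj a b → deg b = deg a + 1 ∨ deg a = deg b + 1)
    (hsign : ∀ a b, G.Adj a b → φ a b = 1 ∨ φ a b = -1)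
    (hsymm : ∀ a b, φ a b = φ b a)
    (hdiamond : G.IsDiamondGraph)
    (hadmissible : ∀ a b c d : Γ, G.Adj a b → G.Adj b c → G.Adj c d → G.Adj d a →
      ¬ G.Adj a c → ¬ G.Adj b d → φ a b * φ b c + φ a d * φ d c = 0)
    (hconn : G.Connected)
    (r : ℕ) (hrank : ∀ a : Γ, G.degree a = r)
    (d δ : (Γ → F) → (Γ → F))
    (hd : ∀ f b, d f b =
      ∑ a ∈ Finset.univ.filter (fun a => G.Adj a b ∧ deg b = deg a - 1),
        (φ a b : F) * f a)
    (hδ : ∀ f b, δ f b =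
      ∑ a ∈ Finset.univ.filter (fun a => G.Adj a b ∧ deg b = deg a + 1),
        (φ a b : F) * f a)
    (hp : ¬ p ∣ r) :
    (∀ f : Γ → F, d (δ f) + δ (d f) = (r : F) • f) ∧
    (∀ f : Γ → F, d f = 0 → ∃ g, d g = f) ∧
    (∀ f : Γ → F, δ f = 0 → ∃ g, δ g = f) := by
  
  classical
  have hr0 : (r : F) ≠ 0 := fun h => hp ((CharP.cast_eq_zero_iff F p r).mp h)
  have key : ∀ f : Γ → F, d (δ f) + δ (d f) = (r : F) • f := by
    intro f
    funext b
    have e1 : d (δ f) b = ∑ c : Γ, ∑ a : Γ,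
        (if (G.Adj a b ∧ deg b = deg a - 1) ∧ (G.Adj c a ∧ deg a = deg c + 1)
          then (φ a b : F) * (φ c a) * f c else 0) := by
      rw [hd, Finset.sum_filter]
      have h : ∀ a : Γ, (if G.Adj a b ∧ deg b = deg a - 1 then (φ a b : F) * δ f a else 0)
          = ∑ c : Γ, (if (G.Adj a b ∧ deg b = deg a - 1) ∧ (G.Adj c a ∧ deg a = deg c + 1)
              then (φ a b : F) * (φ c a) * f c else 0) := by
        intro a
        by_cases h1 : G.Adj a b ∧ deg b = deg a - 1
        · simp only [h1, if_true, true_and]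
          rw [hδ, Finset.sum_filter, Finset.mul_sum]
          refine Finset.sum_congr rfl fun c _ => ?_
          by_cases h2 : G.Adj c a ∧ deg a = deg c + 1 <;> simp [h2, mul_assoc]
        · simp [h1]
      simp_rw [h]
      exact Finset.sum_comm
    have e2 : δ (d f) b = ∑ c : Γ, ∑ a : Γ,
        (if (G.Adj a b ∧ deg b = deg a + 1) ∧ (G.Adj c a ∧ deg a = deg c - 1)
          then (φ a b : F) * (φ c a) * f c else 0) := by
      rw [hδ, Finset.sum_filter]
      have h : ∀ a : Γ, (if G.Adj a b ∧ deg b = deg a + 1 then (φ a b : F) * d f a else 0)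
          = ∑ c : Γ, (if (G.Adj a b ∧ deg b = deg a + 1) ∧ (G.Adj c a ∧ deg a = deg c - 1)
              then (φ a b : F) * (φ c a) * f c else 0) := by
        intro a
        by_cases h1 : G.Adj a b ∧ deg b = deg a + 1
        · simp only [h1, if_true, true_and]
          rw [hd, Finset.sum_filter, Finset.mul_sum]
          refine Finset.sum_congr rfl fun c _ => ?_
          by_cases h2 : G.Adj c a ∧ deg a = deg c - 1 <;> simp [h2, mul_assoc]
        · simp [h1]
      simp_rw [h]
      exact Finset.sum_comm
    rw [Pi.add_apply, e1, e2, ← Finset.sum_add_distrib]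
    rw [Finset.sum_eq_single b ?_ ?_]
    · -- diagonal term equals r • f b
      have hsq : ∀ a, G.Adj a b → (φ a b : F) * (φ b a) = 1 := by
        intro a h
        rw [hsymm b a]
        rcases hsign a b h with h' | h' <;> rw [h'] <;> norm_num
      have t1 : (∑ a : Γ, (if (G.Adj a b ∧ deg b = deg a - 1) ∧ (G.Adj b a ∧ deg a = deg b + 1)
          then (φ a b : F) * (φ b a) * f b else 0))
          = ∑ a : Γ, (if G.Adj a b ∧ deg b = deg a - 1 then f b else 0) := by
        refine Finset.sum_congr rfl fun a _ => ?_
        by_cases hc : G.Adj a b ∧ deg b = deg a - 1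
        · rw [if_pos ⟨hc, hc.1.symm, by omega⟩, if_pos hc, hsq a hc.1, one_mul]
        · rw [if_neg (fun hh => hc hh.1), if_neg hc]
      have t2 : (∑ a : Γ, (if (G.Adj a b ∧ deg b = deg a + 1) ∧ (G.Adj b a ∧ deg a = deg b - 1)
          then (φ a b : F) * (φ b a) * f b else 0))
          = ∑ a : Γ, (if G.Adj a b ∧ deg b = deg a + 1 then f b else 0) := by
        refine Finset.sum_congr rfl fun a _ => ?_
        by_cases hc : G.Adj a b ∧ deg b = deg a + 1
        · rw [if_pos ⟨hc, hc.1.symm, by omega⟩, if_pos hc, hsq a hc.1, one_mul]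
        · rw [if_neg (fun hh => hc hh.1), if_neg hc]
      rw [t1, t2, ← Finset.sum_filter, ← Finset.sum_filter,
        Finset.sum_const, Finset.sum_const, ← add_smul]
      have hcard : (Finset.univ.filter (fun a => G.Adj a b ∧ deg b = deg a - 1)).card
          + (Finset.univ.filter (fun a => G.Adj a b ∧ deg b = deg a + 1)).card = r := by
        rw [← Finset.card_union_of_disjoint]
        · have hu : (Finset.univ.filter (fun a => G.Adj a b ∧ deg b = deg a - 1))
              ∪ (Finset.univ.filter (fun a => G.Adj a b ∧ deg b = deg a + 1))
              = G.neighborFinset b := by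
            ext a
            simp only [Finset.mem_union, Finset.mem_filter, Finset.mem_univ, true_and,
              SimpleGraph.mem_neighborFinset]
            constructor
            · rintro (⟨h, _⟩ | ⟨h, _⟩) <;> exact h.symm
            · intro h
              rcases hgraded b a h with h' | h'
              · exact Or.inl ⟨h.symm, by omega⟩
              · exact Or.inr ⟨h.symm, by omega⟩
          rw [hu, SimpleGraph.card_neighborFinset_eq_degree, hrank b]
        · rw [Finset.disjoint_left]
          intro a h1 h2
          have h3 := (Finset.mem_filter.mp h2).2.2
          have h4 := (Finset.mem_filter.mp h1).2.2
          omega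
      rw [hcard, Pi.smul_apply, smul_eq_mul, nsmul_eq_mul]
    · -- off-diagonal terms vanish
      intro c _ hcb
      rw [← Finset.sum_add_distrib]
      by_cases hdeg : deg c = deg b
      · have step : (∑ a : Γ,
            ((if (G.Adj a b ∧ deg b = deg a - 1) ∧ (G.Adj c a ∧ deg a = deg c + 1)
              then (φ a b : F) * (φ c a) * f c else 0)
            + (if (G.Adj a b ∧ deg b = deg a + 1) ∧ (G.Adj c a ∧ deg a = deg c - 1)
              then (φ a b : F) * (φ c a) * f c else 0)))
            = ∑ a : Γ, (if G.Adj a b ∧ G.Adj a c then (φ a b : F) * (φ c a) * f c else 0) := by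
          refine Finset.sum_congr rfl fun a _ => ?_
          by_cases hab : G.Adj a b
          · by_cases hac : G.Adj a c
            · have hca : G.Adj c a := hac.symm
              have hg := hgraded a b hab
              simp only [hab, hac, hca, true_and, and_true]
              split_ifs <;> first | ring1 | (exfalso; omega)
            · have hca : ¬ G.Adj c a := fun h => hac h.symm
              simp [hac, hca]
          · simp [hab]
        rw [step, ← Finset.sum_filter]
        have hz := diamond_cancel (F := F) G φ hsymm hdiamond hadmissible b c (Ne.symm hcb)
        calc (∑ a ∈ Finset.univ.filter (fun a => G.Adj a b ∧ G.Adj a c),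
              (φ a b : F) * (φ c a) * f c)
            = (∑ a ∈ Finset.univ.filter (fun a => G.Adj a b ∧ G.Adj a c),
              (φ a b : F) * (φ c a)) * f c := by rw [Finset.sum_mul]
          _ = 0 := by rw [hz, zero_mul]
      · have z1 : ∀ a : Γ, (if (G.Adj a b ∧ deg b = deg a - 1) ∧ (G.Adj c a ∧ deg a = deg c + 1)
            then (φ a b : F) * (φ c a) * f c else 0) = 0 := by
          intro a
          rw [if_neg]
          rintro ⟨⟨_, h1⟩, _, h2⟩
          omega
        have z2 : ∀ a : Γ, (if (G.Adj a b ∧ deg b = deg a + 1) ∧ (G.Adj c a ∧ deg a = deg c - 1)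
            then (φ a b : F) * (φ c a) * f c else 0) = 0 := by
          intro a
          rw [if_neg]
          rintro ⟨⟨_, h1⟩, _, h2⟩
          omega
        simp [z1, z2]
    · intro hb
      exact absurd (Finset.mem_univ b) hb
  refine ⟨key, ?_, ?_⟩
  · intro f hf
    refine ⟨(r : F)⁻¹ • δ f, ?_⟩
    have hdl : d ((r : F)⁻¹ • δ f) = (r : F)⁻¹ • d (δ f) := by
      funext b
      rw [hd, Pi.smul_apply, smul_eq_mul, hd, Finset.mul_sum]
      exact Finset.sum_congr rfl fun a _ => by simp [Pi.smul_apply, smul_eq_mul]; ring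
    have hz : δ (d f) = 0 := by
      funext b
      rw [hf, hδ]
      simp
    have hk := key f
    rw [hz, add_zero] at hk
    rw [hdl, hk, smul_smul, inv_mul_cancel₀ hr0, one_smul]
  · intro f hf
    refine ⟨(r : F)⁻¹ • d f, ?_⟩
    have hdl : δ ((r : F)⁻¹ • d f) = (r : F)⁻¹ • δ (d f) := by
      funext b
      rw [hδ, Pi.smul_apply, smul_eq_mul, hδ, Finset.mul_sum]
      exact Finset.sum_congr rfl fun a _ => by simp [Pi.smul_apply, smul_eq_mul]; ring
    have hz : d (δ f) = 0 := by
      funext b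
      rw [hf, hd]
      simp
    have hk := key f
    rw [hz, zero_add] at hk
    rw [hdl, hk, smul_smul, inv_mul_cancel₀ hr0, one_smul]
end

section
/- Let R⁺ be the positive root system of a semisimple complex Lie algebra with Weyl group W acting on the ambient vector space V. For w ∈ W and a subset σ ⊆ R⁺, define w∘σ = (w·(σ ∪ (−σᶜ))) ∩ R⁺, where σᶜ = R⁺\σ and w·S denotes the pointwise Weyl action. Then ∘ is a group action of W on the set of subsets of R⁺: 1∘σ = σ and w'∘(w∘σ) = (w'w)∘σ. -/
open scoped Pointwise

/-- The twisted Weyl action `w∘σ = (w·(σ ∪ (−σᶜ))) ∩ R⁺` on subsets of the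
positive system is a group action: `1∘σ = σ` and `w'∘(w∘σ) = (w'w)∘σ`. -/
theorem twisted_weyl_action_is_group_action
    {G V : Type*} [Group G] [AddCommGroup V] [DistribMulAction G V]
    (Rp : Set V)
    (hdisj : ∀ v ∈ Rp, -v ∉ Rp)
    (hinv : ∀ (w : G), ∀ v : V, (v ∈ Rp ∨ -v ∈ Rp) → (w • v ∈ Rp ∨ -(w • v) ∈ Rp))
    (circ : G → Set V → Set V)
    (hcirc : ∀ (w : G) (σ : Set V), circ w σ = (w • (σ ∪ -(Rp \ σ))) ∩ Rp) :
    ∀ σ : Set V, σ ⊆ Rp →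
      circ (1 : G) σ = σ ∧ ∀ w w' : G, circ w' (circ w σ) = circ (w' * w) σ := by
  intro σ hσ
  refine ⟨?_, ?_⟩
  · rw [hcirc, one_smul]
    ext v
    constructor
    · rintro ⟨hv, hvRp⟩
      rcases hv with h | h
      · exact h
      · exact absurd (Set.mem_neg.mp h).1 (hdisj v hvRp)
    · intro hv
      exact ⟨Or.inl hv, hσ hv⟩
  · intro w w'
    set T : Set V := σ ∪ -(Rp \ σ) with hTdef
    have hTsub : ∀ x ∈ T, x ∈ Rp ∨ -x ∈ Rp := by
      rintro x (h | h)
      · exact Or.inl (hσ h)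
      · exact Or.inr (Set.mem_neg.mp h).1
    have hTc1 : ∀ x ∈ T, -x ∉ T := by
      rintro x (h | h) (h' | h')
      · exact hdisj x (hσ h) (hσ h')
      · have := Set.mem_neg.mp h'
        rw [neg_neg] at this
        exact this.2 h
      · exact (Set.mem_neg.mp h).2 h'
      · have := Set.mem_neg.mp h'
        rw [neg_neg] at this
        exact hdisj x this.1 (Set.mem_neg.mp h).1
    have hTc2 : ∀ x : V, (x ∈ Rp ∨ -x ∈ Rp) → x ∈ T ∨ -x ∈ T := by
      intro x hx
      by_cases hxσ : x ∈ σ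
      · exact Or.inl (Or.inl hxσ)
      by_cases hxn : -x ∈ σ
      · exact Or.inr (Or.inl hxn)
      rcases hx with hx | hx
      · refine Or.inr (Or.inr (Set.mem_neg.mpr ?_))
        rw [neg_neg]
        exact ⟨hx, hxσ⟩
      · exact Or.inl (Or.inr (Set.mem_neg.mpr ⟨hx, hxn⟩))
    set S : Set V := w • T with hSdef
    have hmemS : ∀ x : V, x ∈ S ↔ w⁻¹ • x ∈ T := fun x =>
      Set.mem_smul_set_iff_inv_smul_mem
    have hSsub : ∀ x ∈ S, x ∈ Rp ∨ -x ∈ Rp := by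
      intro x hx
      have := hinv w _ (hTsub _ ((hmemS x).mp hx))
      simpa using this
    have hSc1 : ∀ x ∈ S, -x ∉ S := by
      intro x hx hnx
      exact hTc1 _ ((hmemS x).mp hx) (by simpa [smul_neg] using (hmemS (-x)).mp hnx)
    have hSc2 : ∀ x : V, (x ∈ Rp ∨ -x ∈ Rp) → x ∈ S ∨ -x ∈ S := by
      intro x hx
      rcases hTc2 (w⁻¹ • x) (hinv w⁻¹ x hx) with h | h
      · exact Or.inl ((hmemS x).mpr h)
      · exact Or.inr ((hmemS (-x)).mpr (by simpa [smul_neg] using h))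
    set τ : Set V := S ∩ Rp with hτdef
    have hkey : τ ∪ -(Rp \ τ) = S := by
      ext x
      constructor
      · rintro (hx | hx)
        · exact hx.1
        · have h1 : -x ∈ Rp := (Set.mem_neg.mp hx).1
          have h2 : -x ∉ τ := (Set.mem_neg.mp hx).2
          rcases hSc2 x (Or.inr h1) with h | h
          · exact h
          · exact absurd ⟨h, h1⟩ h2
      · intro hx
        rcases hSsub x hx with h | h
        · exact Or.inl ⟨hx, h⟩
        · refine Or.inr (Set.mem_neg.mpr ⟨h, ?_⟩)
          intro hc
          exact hSc1 x hx hc.1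
    have e1 : circ w σ = τ := by rw [hcirc, hτdef, hSdef, hTdef]
    rw [e1, hcirc w' τ, hkey, hcirc (w' * w) σ, hSdef, hTdef, smul_smul]
end

section
/- If α ∈ Ω(R⁺) is a weight (i.e., α = ω(σ) for some σ ⊆ R⁺) such that the fiber ω⁻¹(α) contains a nonempty set σ, and σ contains no simple root, then there exists a set σ' ≠ σ with ω(σ') = α; equivalently, if ω⁻¹(α) = {σ} is a singleton with σ nonempty, then σ contains a simple root. -/
/-- If the weight fiber of `α = ω(σ)` is considered for a nonempty `σ ⊆ R⁺`
containing no simple root, then there is a different set `σ' ⊆ R⁺` with the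
same weight `ω(σ') = α`; equivalently, a singleton fiber `ω⁻¹(α) = {σ}` with
`σ` nonempty forces `σ` to contain a simple root.  Here `ω(σ) = ϱ − Σ_{e∈σ} e`,
`Δ ⊆ R⁺` is the set of simple roots, every non-simple positive root decomposes
as `e = s + e'` with `s` simple, `e'` positive, and `L` is a linear functional
positive on all positive roots. -/
theorem singleton_fiber_contains_simple_root
    {V : Type*} [AddCommGroup V] [Module ℝ V] [DecidableEq V]
    (Rp Δ : Finset V) (hΔ : Δ ⊆ Rp)
    (L : V →ₗ[ℝ] ℝ) (hL : ∀ e ∈ Rp, 0 < L e)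
    (hkey : ∀ e ∈ Rp, e ∉ Δ → ∃ s ∈ Δ, ∃ e' ∈ Rp, e' ≠ s ∧ e = s + e')
    (ϱ : V)
    (σ : Finset V) (hσR : σ ⊆ Rp) (hne : σ.Nonempty)
    (hnosimple : ∀ s ∈ Δ, s ∉ σ) :
    ∃ σ' : Finset V, σ' ⊆ Rp ∧ σ' ≠ σ ∧
      ϱ - ∑ e ∈ σ', e = ϱ - ∑ e ∈ σ, e := by
  obtain ⟨e, heσ, hemin⟩ := σ.exists_min_image L hne
  have heR : e ∈ Rp := hσR heσ
  have heΔ : e ∉ Δ := fun h => hnosimple e h heσ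
  obtain ⟨s, hsΔ, e', he'R, he's, heq⟩ := hkey e heR heΔ
  have hsσ : s ∉ σ := hnosimple s hsΔ
  have hLe' : L e' < L e := by
    have : L e = L s + L e' := by rw [heq, map_add]
    have := hL s (hΔ hsΔ); linarith
  have he'σ : e' ∉ σ := fun h => absurd (hemin e' h) (by linarith)
  refine ⟨insert s (insert e' (σ.erase e)), ?_, ?_, ?_⟩
  · intro x hx
    simp only [Finset.mem_insert] at hx
    rcases hx with rfl | rfl | hx
    · exact hΔ hsΔ
    · exact he'R
    · exact hσR (Finset.mem_of_mem_erase hx)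
  · intro h
    exact hsσ (h ▸ Finset.mem_insert_self s _)
  · have hs_notin : s ∉ insert e' (σ.erase e) := by
      simp only [Finset.mem_insert, Finset.mem_erase]
      rintro (rfl | ⟨_, h⟩)
      · exact he's rfl
      · exact hsσ h
    have he'_notin : e' ∉ σ.erase e := fun h => he'σ (Finset.mem_of_mem_erase h)
    rw [Finset.sum_insert hs_notin, Finset.sum_insert he'_notin,
      Finset.sum_erase_eq_sub heσ]
    rw [heq]; abel
end

section
/- For a weight α with ω⁻¹(α) a singleton, α lies in the Weyl orbit of ϱ: there exists w ∈ W with α = w·ϱ. -/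
/-- If the weight fiber `ω⁻¹(α)` is a singleton, then `α` lies in the Weyl
orbit of the half-sum of positive roots `ϱ`: there is `w ∈ W` with
`α = w·ϱ`.  Here `ω(σ) = ϱ − Σ_{e∈σ} e`, `Δ ⊆ R⁺` are the simple roots,
`r s` is the simple reflection associated to `s ∈ Δ` (it sends `s` to `−s`
and permutes `R⁺\{s}`), every non-simple positive root decomposes as
`s + e'` with `s` simple and `e'` positive, and `L` is a linear functional
positive on positive roots. -/
theorem singleton_fiber_weight_in_weyl_orbit
    {G V : Type*} [Group G] [AddCommGroup V] [Module ℝ V]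
    [DistribMulAction G V] [SMulCommClass G ℝ V] [DecidableEq V]
    (Rp Δ : Finset V) (hΔ : Δ ⊆ Rp)
    (L : V →ₗ[ℝ] ℝ) (hL : ∀ e ∈ Rp, 0 < L e)
    (hdisj : ∀ v ∈ Rp, -v ∉ Rp)
    (hkey : ∀ e ∈ Rp, e ∉ Δ → ∃ s ∈ Δ, ∃ e' ∈ Rp, e' ≠ s ∧ e = s + e')
    (r : V → G)
    (hrs : ∀ s ∈ Δ, r s • s = -s)
    (hinvol : ∀ s ∈ Δ, ∀ v : V, r s • r s • v = v)
    (hperm : ∀ s ∈ Δ, ∀ f ∈ Rp, f ≠ s → r s • f ∈ Rp ∧ r s • f ≠ s)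
    (ϱ : V) (hϱ : ϱ = (2⁻¹ : ℝ) • ∑ e ∈ Rp, e)
    (ω : Finset V → V) (hω : ∀ σ, ω σ = ϱ - ∑ e ∈ σ, e)
    (α : V)
    (huniq : ∃! σ : Finset V, σ ⊆ Rp ∧ ω σ = α) :
    ∃ w : G, α = w • ϱ := by
  classical
  -- basic facts about the reflections
  have hbase : ∀ s ∈ Δ, ∀ X : Finset V, X ⊆ Rp → s ∉ X →
      X.image (fun v => r s • v) ⊆ Rp ∧ s ∉ X.image (fun v => r s • v) ∧
      (X.image (fun v => r s • v)).image (fun v => r s • v) = X ∧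
      ∑ f ∈ X.image (fun v => r s • v), f = r s • ∑ f ∈ X, f := by
    intro s hs X hXR hsX
    have hinj : Function.Injective (fun v : V => r s • v) := MulAction.injective (r s)
    have hmem : ∀ f ∈ X, r s • f ∈ Rp ∧ r s • f ≠ s := fun f hf =>
      hperm s hs f (hXR hf) (fun h => hsX (h ▸ hf))
    refine ⟨?_, ?_, ?_, ?_⟩
    · intro x hx
      obtain ⟨f, hf, rfl⟩ := Finset.mem_image.mp hx
      exact (hmem f hf).1
    · intro hx
      obtain ⟨f, hf, hfe⟩ := Finset.mem_image.mp hx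
      exact (hmem f hf).2 hfe
    · have hcomp : ((fun v : V => r s • v) ∘ fun v : V => r s • v) = id :=
        funext (hinvol s hs)
      rw [Finset.image_image, hcomp, Finset.image_id]
    · rw [Finset.sum_image (fun a _ b _ h => hinj h), Finset.smul_sum]
  -- the reflection sends ϱ to ϱ - s
  have hrho : ∀ s ∈ Δ, r s • ϱ = ϱ - s := by
    intro s hs
    have hsR : s ∈ Rp := hΔ hs
    obtain ⟨himR, hsni, -, hsum⟩ := hbase s hs (Rp.erase s)
      (Finset.erase_subset _ _) (Finset.notMem_erase _ _)
    have himg : (Rp.erase s).image (fun v => r s • v) = Rp.erase s := by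
      apply Finset.eq_of_subset_of_card_le
      · intro x hx
        exact Finset.mem_erase.mpr ⟨fun h => hsni (h ▸ hx), himR hx⟩
      · rw [Finset.card_image_of_injective _ (MulAction.injective (r s))]
    have hsum2 : r s • ∑ f ∈ Rp.erase s, f = ∑ f ∈ Rp.erase s, f := by
      rw [← hsum, himg]
    have hsumR : r s • ∑ e ∈ Rp, e = (∑ e ∈ Rp, e) - s - s := by
      have h1 : ∑ e ∈ Rp, e = s + ∑ f ∈ Rp.erase s, f :=
        (Finset.add_sum_erase _ _ hsR).symm
      rw [h1, smul_add, hrs s hs, hsum2]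
      abel
    rw [hϱ, smul_comm, hsumR]
    module
  -- reflecting a set containing s
  have hωrefl : ∀ s ∈ Δ, ∀ τ : Finset V, τ ⊆ Rp → s ∈ τ →
      ω ((τ.erase s).image (fun v => r s • v)) = r s • ω τ := by
    intro s hs τ hτR hsτ
    obtain ⟨-, -, -, hsum⟩ := hbase s hs (τ.erase s)
      ((Finset.erase_subset _ _).trans hτR) (Finset.notMem_erase _ _)
    rw [hω, hω, hsum, Finset.sum_erase_eq_sub hsτ, smul_sub, smul_sub, hrho s hs, hrs s hs]
    abel
  -- reflecting a set not containing s, then inserting s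
  have hωins : ∀ s ∈ Δ, ∀ τ : Finset V, τ ⊆ Rp → s ∉ τ →
      ω (insert s (τ.image (fun v => r s • v))) = r s • ω τ := by
    intro s hs τ hτR hsτ
    obtain ⟨-, hsni, -, hsum⟩ := hbase s hs τ hτR hsτ
    rw [hω, hω, Finset.sum_insert hsni, hsum, smul_sub, hrho s hs]
    abel
  -- main induction
  have key : ∀ n : ℕ, ∀ σ : Finset V, σ.card = n → σ ⊆ Rp →
      (∀ τ : Finset V, τ ⊆ Rp → ω τ = ω σ → τ = σ) → ∃ w : G, ω σ = w • ϱ := by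
    intro n
    induction n using Nat.strong_induction_on with
    | _ n ih =>
      intro σ hcard hσR huσ
      rcases Finset.eq_empty_or_nonempty σ with rfl | hne
      · refine ⟨1, ?_⟩
        rw [hω]
        simp
      -- Step 1: σ contains a simple root
      have hstep : ∃ s ∈ Δ, s ∈ σ := by
        by_contra hcon
        push_neg at hcon
        obtain ⟨e, heσ, hemin⟩ := Finset.exists_min_image σ L hne
        have heR := hσR heσ
        have heΔ : e ∉ Δ := fun h => hcon e h heσ
        obtain ⟨s, hs, e', he'R, he's, hee⟩ := hkey e heR heΔ
        have hLs := hL s (hΔ hs)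
        have hLe' : L e' < L e := by
          have h := congrArg L hee
          simp only [map_add] at h
          linarith
        have he'σ : e' ∉ σ := fun h => absurd (hemin e' h) (not_le.mpr hLe')
        have hsσ : s ∉ σ := hcon s hs
        have hes : e ≠ s := fun h => heΔ (h ▸ hs)
        have hee' : e ≠ e' := by
          intro h
          have h1 : e = s + e := hee.trans (by rw [← h])
          have h2 : (0 : V) + e = s + e := by rw [zero_add, ← h1]
          have hs0 : s = 0 := (add_right_cancel h2).symm
          rw [hs0] at hLs
          simp at hLs
        have hs1 : s ∉ insert e' (σ.erase e) := by
          simp only [Finset.mem_insert, Finset.mem_erase]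
          push_neg
          exact ⟨Ne.symm he's, fun _ => hsσ⟩
        have he'1 : e' ∉ σ.erase e := fun h => he'σ (Finset.mem_of_mem_erase h)
        have hσ'R : insert s (insert e' (σ.erase e)) ⊆ Rp := by
          refine Finset.insert_subset (hΔ hs) (Finset.insert_subset he'R ?_)
          exact (Finset.erase_subset _ _).trans hσR
        have hsum' : ∑ f ∈ insert s (insert e' (σ.erase e)), f = ∑ f ∈ σ, f := by
          rw [Finset.sum_insert hs1, Finset.sum_insert he'1, Finset.sum_erase_eq_sub heσ, hee]
          abel
        have heq : insert s (insert e' (σ.erase e)) = σ :=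
          huσ _ hσ'R (by rw [hω, hω, hsum'])
        exact hsσ (heq ▸ Finset.mem_insert_self s _)
      obtain ⟨s, hs, hsσ⟩ := hstep
      -- Step 2: reflect σ by r s
      set σ' := (σ.erase s).image (fun v => r s • v) with hσ'def
      obtain ⟨hσ'R, hsσ', hback, -⟩ := hbase s hs (σ.erase s)
        ((Finset.erase_subset _ _).trans hσR) (Finset.notMem_erase _ _)
      have hωσ' : ω σ' = r s • ω σ := hωrefl s hs σ hσR hsσ
      have hcard' : σ'.card = n - 1 := by
        rw [hσ'def, Finset.card_image_of_injective _ (MulAction.injective (r s)),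
          Finset.card_erase_of_mem hsσ, hcard]
      have huσ' : ∀ τ : Finset V, τ ⊆ Rp → ω τ = ω σ' → τ = σ' := by
        intro τ hτR hτω
        by_cases hsτ : s ∈ τ
        · exfalso
          have h1 := hωrefl s hs τ hτR hsτ
          obtain ⟨hτ'R, hsni, -, -⟩ := hbase s hs (τ.erase s)
            ((Finset.erase_subset _ _).trans hτR) (Finset.notMem_erase _ _)
          have heq : (τ.erase s).image (fun v => r s • v) = σ := by
            apply huσ _ hτ'R
            rw [h1, hτω, hωσ', hinvol s hs]
          exact hsni (heq ▸ hsσ)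
        · have h1 := hωins s hs τ hτR hsτ
          obtain ⟨hτiR, hsni, hτback, -⟩ := hbase s hs τ hτR hsτ
          have hins : insert s (τ.image (fun v => r s • v)) = σ := by
            apply huσ _ (Finset.insert_subset (hΔ hs) hτiR)
            rw [h1, hτω, hωσ', hinvol s hs]
          have h2 : σ.erase s = τ.image (fun v => r s • v) := by
            rw [← hins, Finset.erase_insert hsni]
          have : σ' = τ := by rw [hσ'def, h2, hτback]
          exact this.symm
      have hnpos : 0 < n := hcard ▸ Finset.card_pos.mpr hne
      obtain ⟨w', hw'⟩ := ih (n - 1) (Nat.sub_lt hnpos one_pos) σ' hcard' hσ'R huσ'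
      refine ⟨r s * w', ?_⟩
      have h3 : ω σ = r s • ω σ' := by rw [hωσ', hinvol s hs]
      rw [h3, hw', mul_smul]
  obtain ⟨σ, ⟨hσR, hσω⟩, hσu⟩ := huniq
  obtain ⟨w, hw⟩ := key σ.card σ rfl hσR (fun τ hτR hτω => hσu τ ⟨hτR, hτω.trans hσω⟩)
  exact ⟨w, hσω.symm.trans hw⟩
end

section
/- If α ∈ Ω(R⁺) is fixed by some reflection r_e with e ∈ R⁺ (i.e., r_e·α = α), then the fiber ω⁻¹(α) has more than one element. Consequently, if ω⁻¹(α) is a singleton, then r_e·α ≠ α for every positive root e. -/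
/-!
Encode `σ ⊆ R⁺` by the signed set `σ ∪ -(R⁺ \ σ)`, which contains exactly one of `±f` for each
`f ∈ R⁺`; then `ω(σ)` is minus half the sum of the signed set. A reflection `r_e` permutes the
roots up to sign, so it maps signed sets to signed sets, and this twisted action `σ ↦ r_e ∘ σ`
transforms `ω` by `r_e`. When `r_e · α = α` it therefore maps the fiber `ω⁻¹(α)` to itself, and
it never fixes a point of it, since `e ∈ r_e ∘ σ ↔ e ∉ σ`.
-/

open Finset
open scoped Pointwise

namespace PositiveRoots

variable {V G : Type*} [AddCommGroup V] [DecidableEq V] {Rp σ T : Finset V}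

def signedSet (Rp σ : Finset V) : Finset V := σ ∪ -(Rp \ σ)

structure IsSignChoice (Rp T : Finset V) : Prop where
  mem_or_neg_mem_of_mem : ∀ x ∈ T, x ∈ Rp ∨ -x ∈ Rp
  neg_notMem : ∀ x ∈ T, -x ∉ T
  mem_or_neg_mem : ∀ f ∈ Rp, f ∈ T ∨ -f ∈ T

lemma disjoint_neg_sdiff (hdisj : ∀ v ∈ Rp, -v ∉ Rp) (hσ : σ ⊆ Rp) :
    Disjoint σ (-(Rp \ σ)) :=
  disjoint_left.2 fun x hx hx' => hdisj x (hσ hx) (mem_sdiff.1 (mem_neg'.1 hx')).1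

lemma isSignChoice_signedSet (hdisj : ∀ v ∈ Rp, -v ∉ Rp) (hσ : σ ⊆ Rp) :
    IsSignChoice Rp (signedSet Rp σ) where
  mem_or_neg_mem_of_mem x hx := by
    rcases mem_union.1 hx with h | h
    · exact .inl (hσ h)
    · exact .inr (mem_sdiff.1 (mem_neg'.1 h)).1
  neg_notMem x hx hnx := by
    simp only [signedSet, mem_union, mem_neg', neg_neg, mem_sdiff] at hx hnx
    rcases hx with hx | ⟨hx, hxσ⟩ <;> rcases hnx with hnx | ⟨hnx, hnxσ⟩
    · exact hdisj x (hσ hx) (hσ hnx)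
    · exact hnxσ hx
    · exact hxσ hnx
    · exact hdisj x hnx hx
  mem_or_neg_mem f hf := by
    by_cases h : f ∈ σ
    · exact .inl (mem_union_left _ h)
    · exact .inr (mem_union_right _ (mem_neg'.2 (by rw [neg_neg]; exact mem_sdiff.2 ⟨hf, h⟩)))

lemma IsSignChoice.signedSet_inter (hT : IsSignChoice Rp T) : signedSet Rp (T ∩ Rp) = T := by
  ext x
  simp only [signedSet, mem_union, mem_inter, mem_neg', mem_sdiff, not_and]
  constructor
  · rintro (⟨hx, -⟩ | ⟨hx, hxT⟩)
    · exact hx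
    · simpa using (hT.mem_or_neg_mem _ hx).resolve_left fun h => hxT h hx
  · intro hx
    by_cases h : x ∈ Rp
    · exact .inl ⟨hx, h⟩
    · exact .inr ⟨(hT.mem_or_neg_mem_of_mem x hx).resolve_left h,
        fun h' => absurd h' (hT.neg_notMem x hx)⟩

lemma sum_signedSet (hdisj : ∀ v ∈ Rp, -v ∉ Rp) (hσ : σ ⊆ Rp) :
    ∑ x ∈ signedSet Rp σ, x = ∑ x ∈ σ, x - ∑ x ∈ Rp \ σ, x := by
  rw [signedSet, sum_union (disjoint_neg_sdiff hdisj hσ), sum_neg_index, sum_neg_distrib,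
    sub_eq_add_neg]

section Action

variable [Group G] [DistribMulAction G V] {g : G}

lemma IsSignChoice.smul (hT : IsSignChoice Rp T) (hg : ∀ f ∈ Rp, g • f ∈ Rp ∨ -(g • f) ∈ Rp)
    (hinvol : ∀ v : V, g • g • v = v) : IsSignChoice Rp (g • T) where
  mem_or_neg_mem_of_mem x hx := by
    obtain ⟨t, ht, rfl⟩ := mem_smul_finset.1 hx
    rcases hT.mem_or_neg_mem_of_mem t ht with h | h
    · exact hg t h
    · simpa [smul_neg, or_comm] using hg (-t) h
  neg_notMem x hx hnx := by
    obtain ⟨t, ht, rfl⟩ := mem_smul_finset.1 hx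
    rw [← smul_neg, smul_mem_smul_finset_iff] at hnx
    exact hT.neg_notMem t ht hnx
  mem_or_neg_mem f hf := by
    have hinv : g⁻¹ • f = g • f := inv_smul_eq_iff.2 (hinvol f).symm
    rw [← inv_smul_mem_iff, ← inv_smul_mem_iff, smul_neg, hinv]
    rcases hg f hf with h | h
    · exact hT.mem_or_neg_mem _ h
    · simpa [or_comm] using hT.mem_or_neg_mem _ h

def twistedSMul (g : G) (Rp σ : Finset V) : Finset V := (g • signedSet Rp σ) ∩ Rp

lemma twistedSMul_subset : twistedSMul g Rp σ ⊆ Rp := inter_subset_right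

lemma signedSet_twistedSMul (hdisj : ∀ v ∈ Rp, -v ∉ Rp) (hσ : σ ⊆ Rp)
    (hg : ∀ f ∈ Rp, g • f ∈ Rp ∨ -(g • f) ∈ Rp) (hinvol : ∀ v : V, g • g • v = v) :
    signedSet Rp (twistedSMul g Rp σ) = g • signedSet Rp σ :=
  ((isSignChoice_signedSet hdisj hσ).smul hg hinvol).signedSet_inter

lemma mem_twistedSMul_iff (hdisj : ∀ v ∈ Rp, -v ∉ Rp) (hσ : σ ⊆ Rp) {e : V} (he : e ∈ Rp)
    (hge : g • e = -e) : e ∈ twistedSMul g Rp σ ↔ e ∉ σ := by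
  have hinv : g⁻¹ • e = -e := inv_smul_eq_iff.2 (by rw [smul_neg, hge, neg_neg])
  have hneg : -e ∉ σ := fun h => hdisj e he (hσ h)
  rw [twistedSMul, mem_inter, ← inv_smul_mem_iff, hinv, signedSet, mem_union, mem_neg', neg_neg,
    mem_sdiff]
  tauto

lemma twistedSMul_ne (hdisj : ∀ v ∈ Rp, -v ∉ Rp) (hσ : σ ⊆ Rp) {e : V} (he : e ∈ Rp)
    (hge : g • e = -e) : twistedSMul g Rp σ ≠ σ := fun h =>
  iff_not_self (h ▸ mem_twistedSMul_iff hdisj hσ he hge)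

end Action

section Weight

variable [Module ℝ V]

noncomputable def weight (Rp σ : Finset V) : V := (2⁻¹ : ℝ) • ∑ f ∈ Rp, f - ∑ f ∈ σ, f

lemma weight_eq_neg_half_sum_signedSet (hdisj : ∀ v ∈ Rp, -v ∉ Rp) (hσ : σ ⊆ Rp) :
    weight Rp σ = -((2⁻¹ : ℝ) • ∑ x ∈ signedSet Rp σ, x) := by
  rw [weight, sum_signedSet hdisj hσ, ← sum_sdiff hσ]
  module

lemma weight_twistedSMul [Group G] [DistribMulAction G V] [SMulCommClass G ℝ V] {g : G}
    (hdisj : ∀ v ∈ Rp, -v ∉ Rp) (hσ : σ ⊆ Rp) (hg : ∀ f ∈ Rp, g • f ∈ Rp ∨ -(g • f) ∈ Rp)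
    (hinvol : ∀ v : V, g • g • v = v) :
    weight Rp (twistedSMul g Rp σ) = g • weight Rp σ := by
  rw [weight_eq_neg_half_sum_signedSet hdisj twistedSMul_subset,
    signedSet_twistedSMul hdisj hσ hg hinvol, weight_eq_neg_half_sum_signedSet hdisj hσ,
    smul_finset_def, sum_image (MulAction.injective g).injOn, ← smul_sum, smul_neg, smul_comm g (2⁻¹ : ℝ)]

end Weight

end PositiveRoots

open PositiveRoots in
/-- If a weight `α ∈ Ω(R⁺)` (i.e. `α = ω(σ)` for some `σ ⊆ R⁺`) is fixed by a
reflection `r_e` with `e ∈ R⁺`, then the fiber `ω⁻¹(α)` has more than one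
element; consequently, if the fiber is a singleton then `r_e·α ≠ α` for every
positive root `e`.  Here `ω(σ) = ϱ − Σ_{f∈σ} f`, and for each `e ∈ R⁺` the
reflection `r e` sends `e` to `−e`, is an involution, and maps positive roots
to roots. -/
theorem reflection_fixed_weight_fiber_not_singleton
    {G V : Type*} [Group G] [AddCommGroup V] [Module ℝ V]
    [DistribMulAction G V] [SMulCommClass G ℝ V] [DecidableEq V]
    (Rp : Finset V)
    (hdisj : ∀ v ∈ Rp, -v ∉ Rp)
    (r : V → G)
    (hre : ∀ e ∈ Rp, r e • e = -e)
    (hinvol : ∀ e ∈ Rp, ∀ v : V, r e • r e • v = v)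
    (hinv : ∀ e ∈ Rp, ∀ f ∈ Rp, r e • f ∈ Rp ∨ -(r e • f) ∈ Rp)
    (ϱ : V) (hϱ : ϱ = (2⁻¹ : ℝ) • ∑ f ∈ Rp, f)
    (ω : Finset V → V) (hω : ∀ σ, ω σ = ϱ - ∑ f ∈ σ, f)
    (α : V) (hα : ∃ σ : Finset V, σ ⊆ Rp ∧ ω σ = α) :
    (∀ e ∈ Rp, r e • α = α →
      ∃ σ τ : Finset V, σ ⊆ Rp ∧ τ ⊆ Rp ∧ σ ≠ τ ∧ ω σ = α ∧ ω τ = α) ∧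
    ((∃! σ : Finset V, σ ⊆ Rp ∧ ω σ = α) → ∀ e ∈ Rp, r e • α ≠ α) := by
  obtain rfl : ω = weight Rp := funext fun σ => by rw [hω, hϱ, weight]
  obtain ⟨σ, hσ, rfl⟩ := hα
  have fiber (e : V) (he : e ∈ Rp) (hfix : r e • weight Rp σ = weight Rp σ) :
      ∃ σ' τ : Finset V, σ' ⊆ Rp ∧ τ ⊆ Rp ∧ σ' ≠ τ ∧
        weight Rp σ' = weight Rp σ ∧ weight Rp τ = weight Rp σ :=
    ⟨σ, twistedSMul (r e) Rp σ, hσ, twistedSMul_subset,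
      (twistedSMul_ne hdisj hσ he (hre e he)).symm, rfl,
      by rw [weight_twistedSMul hdisj hσ (hinv e he) (hinvol e he), hfix]⟩
  refine ⟨fiber, ?_⟩
  rintro ⟨u, -, huniq⟩ e he hfix
  obtain ⟨σ₁, τ₁, hσ₁, hτ₁, hne, h₁, h₂⟩ := fiber e he hfix
  exact hne ((huniq σ₁ ⟨hσ₁, h₁⟩).trans (huniq τ₁ ⟨hτ₁, h₂⟩).symm)
end
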